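/- arXiv:2512.00460 — 3 statements merged into one kernel-verified Lean document; each statement's English description precedes it below -/
import Mathlib

section
/- Let R ⊆ L satisfy (GR1), fix δ_0 in the kernel of the bilinear form restricted to ℂR, and for α ∈ R define F(α) = {c ∈ ℂ : α + c δ_0 ∈ R}. If α ∈ R is nonisotropic and F(α) is contained in ℤa for some a ∈ ℂ, then F(α) is a subgroup of (ℂ, +); moreover, for every γ ∈ R one has ⟨γ, α^∨⟩·F(α) ⊆ F(γ), where ⟨γ, α^∨⟩ = 2(γ,α)/(α,α). -/
/-! For `β = α + c δ₀` the composites `s_β s_α` and `s_α s_β` are the translations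
`γ ↦ γ ± ⟨γ, α^∨⟩ c δ₀`, because `δ₀` is isotropic and orthogonal to `R`; this is the second
claim. Applied to `γ = α + d δ₀` it shows that `F(α)` contains `0` and is stable under
`d ↦ d ± 2c` for `c ∈ F(α)`. Such a set inside a cyclic group `ℤa` is a subgroup: if `g`
generates the group it spans, then `F(α)` contains `2ℤg`, and also `g` itself, since either some
element of `F(α)` is an odd multiple of `g`, or `F(α) ⊆ 2ℤg` and then `g ∈ 2ℤg`. -/

noncomputable def sRefl {V : Type*} [AddCommGroup V] [Module ℂ V]
    (B : V → V → ℂ) (α v : V) : V :=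
  v - (2 * B v α / B α α) • α

namespace AddSubgroup

variable {G : Type*} [AddCommGroup G] {S : Set G}

theorem add_two_nsmul_mem_of_mem_closure
    (hadd : ∀ x ∈ S, ∀ s ∈ S, x + 2 • s ∈ S) (hsub : ∀ x ∈ S, ∀ s ∈ S, x - 2 • s ∈ S)
    {t : G} (ht : t ∈ closure S) : ∀ x ∈ S, x + 2 • t ∈ S ∧ x - 2 • t ∈ S := by
  induction ht using closure_induction with
  | mem s hs => exact fun x hx => ⟨hadd x hx s hs, hsub x hx s hs⟩
  | zero => simp
  | add t u _ _ ht hu =>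
    intro x hx
    rw [smul_add, ← add_assoc, sub_add_eq_sub_sub]
    exact ⟨(hu _ (ht x hx).1).1, (hu _ (ht x hx).2).2⟩
  | neg t _ ht =>
    intro x hx
    rw [smul_neg, ← sub_eq_add_neg, sub_neg_eq_add]
    exact (ht x hx).symm

theorem coe_closure_eq_of_add_two_nsmul_mem {a : G} (hSa : S ⊆ zmultiples a) (h0 : 0 ∈ S)
    (hadd : ∀ x ∈ S, ∀ s ∈ S, x + 2 • s ∈ S) (hsub : ∀ x ∈ S, ∀ s ∈ S, x - 2 • s ∈ S) :
    (closure S : Set G) = S := by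
  obtain ⟨n, hn⟩ := (le_zmultiples_iff a (closure S)).mp ((closure_le _).mpr hSa)
  set g := n • a
  have hmul (j : ℤ) : j • g ∈ closure S := hn ▸ zsmul_mem (mem_zmultiples g) j
  have hshift (j : ℤ) := add_two_nsmul_mem_of_mem_closure hadd hsub (hmul j)
  have hg : g ∈ S := by
    by_cases hS2 : S ⊆ zmultiples (2 • g)
    · obtain ⟨j, hj : j • 2 • g = g⟩ : g ∈ zmultiples (2 • g) :=
        (closure_le _).mpr hS2 (hn ▸ mem_zmultiples g)
      have := (hshift j 0 h0).1
      rwa [zero_add, smul_comm, hj] at this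
    · obtain ⟨s, hs, hs2⟩ := Set.not_subset.mp hS2
      obtain ⟨k, rfl⟩ : ∃ k : ℤ, k • g = s := mem_zmultiples_iff.mp (hn ▸ subset_closure hs)
      obtain ⟨j, rfl | rfl⟩ := Int.even_or_odd' k
      · exact absurd ⟨j, by module⟩ hs2
      · have := (hshift j _ hs).2
        rwa [show (2 * j + 1) • g - 2 • j • g = g by module] at this
  refine (Set.Subset.antisymm ?_ subset_closure)
  rintro _ ht
  obtain ⟨k, rfl⟩ : ∃ k : ℤ, k • g = _ := mem_zmultiples_iff.mp (hn ▸ ht)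
  obtain ⟨j, rfl | rfl⟩ := Int.even_or_odd' k
  · have := (hshift j 0 h0).1
    rwa [show 0 + 2 • j • g = (2 * j) • g by module] at this
  · have := (hshift j g hg).1
    rwa [show g + 2 • j • g = (2 * j + 1) • g by module] at this

end AddSubgroup

section Reflection

variable {V : Type*} [AddCommGroup V] [Module ℂ V] (B : V →ₗ[ℂ] V →ₗ[ℂ] ℂ) {α δ : V}

theorem sRefl_add_smul_sRefl (hα : B α α ≠ 0) (hαδ : B α δ = 0) (hδα : B δ α = 0)
    (hδδ : B δ δ = 0) {γ : V} (hγδ : B γ δ = 0) (c : ℂ) :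
    sRefl (B · ·) (α + c • δ) (sRefl (B · ·) α γ) = γ + (2 * B γ α / B α α * c) • δ := by
  simp only [sRefl, map_add, map_sub, map_smul, LinearMap.add_apply, LinearMap.sub_apply,
    LinearMap.smul_apply, smul_eq_mul, hαδ, hδα, hδδ, hγδ, mul_zero, add_zero]
  match_scalars <;> field_simp <;> ring

theorem sRefl_sRefl_add_smul (hα : B α α ≠ 0) (hαδ : B α δ = 0) (hδα : B δ α = 0)
    (hδδ : B δ δ = 0) {γ : V} (hγδ : B γ δ = 0) (c : ℂ) :
    sRefl (B · ·) α (sRefl (B · ·) (α + c • δ) γ) = γ - (2 * B γ α / B α α * c) • δ := by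
  simp only [sRefl, map_add, map_sub, map_smul, LinearMap.add_apply, LinearMap.sub_apply,
    LinearMap.smul_apply, smul_eq_mul, hαδ, hδα, hδδ, hγδ, mul_zero, add_zero]
  match_scalars <;> field_simp
  ring

variable {R : Set V}

theorem add_sub_coroot_smul_mem
    (hrefl : ∀ α ∈ R, ∀ β ∈ R, B α α ≠ 0 → sRefl (B · ·) α β ∈ R) (hα : α ∈ R)
    (hαα : B α α ≠ 0) (hαδ : B α δ = 0) (hδα : B δ α = 0) (hδδ : B δ δ = 0)
    {γ : V} (hγ : γ ∈ R) (hγδ : B γ δ = 0) {c : ℂ} (hc : α + c • δ ∈ R) :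
    γ + (2 * B γ α / B α α * c) • δ ∈ R ∧ γ - (2 * B γ α / B α α * c) • δ ∈ R := by
  have hcc : B (α + c • δ) (α + c • δ) ≠ 0 := by simpa [hαδ, hδα, hδδ] using hαα
  constructor
  · rw [← sRefl_add_smul_sRefl B hαα hαδ hδα hδδ hγδ c]
    exact hrefl _ hc _ (hrefl α hα γ hγ hαα) hcc
  · rw [← sRefl_sRefl_add_smul B hαα hαδ hδα hδδ hγδ c]
    exact hrefl α hα _ (hrefl _ hc γ hγ hcc) hαα

theorem add_smul_add_two_nsmul_mem
    (hrefl : ∀ α ∈ R, ∀ β ∈ R, B α α ≠ 0 → sRefl (B · ·) α β ∈ R) (hα : α ∈ R)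
    (hαα : B α α ≠ 0) (hαδ : B α δ = 0) (hδα : B δ α = 0) (hδδ : B δ δ = 0)
    {c d : ℂ} (hd : α + d • δ ∈ R) (hc : α + c • δ ∈ R) :
    α + (d + 2 • c) • δ ∈ R ∧ α + (d - 2 • c) • δ ∈ R := by
  have hcoroot : 2 * B (α + d • δ) α / B α α = 2 := by
    simp only [map_add, map_smul, LinearMap.add_apply, LinearMap.smul_apply, hδα]
    field_simp
    ring
  have := add_sub_coroot_smul_mem B hrefl hα hαα hαδ hδα hδδ hd (by simp [hαδ, hδδ]) hc
  rw [hcoroot] at this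
  constructor
  · convert this.1 using 1; module
  · convert this.2 using 1; module

end Reflection

theorem stmt_5_general
    (V : Type*) [AddCommGroup V] [Module ℂ V]
    (B : V → V → ℂ)
    (hB1 : ∀ x : V, IsLinearMap ℂ (B x))
    (hB2 : ∀ y : V, IsLinearMap ℂ (fun x => B x y))
    (hsymm : ∀ x y : V, B x y = B y x)
    (R : Set V)
    -- (GR1)
    (hrefl : ∀ α ∈ R, ∀ β ∈ R, B α α ≠ 0 → sRefl B α β ∈ R)
    -- δ₀ lies in the kernel of the form restricted to the span of R
    (δ₀ : V) (hδ₀span : δ₀ ∈ Submodule.span ℂ R) (hδ₀ : ∀ γ ∈ R, B δ₀ γ = 0)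
    (α : V) (hα : α ∈ R) (hαan : B α α ≠ 0)
    -- discreteness: F(α) ⊆ ℤ a
    (a : ℂ) (hdisc : ∀ c : ℂ, α + c • δ₀ ∈ R → ∃ m : ℤ, c = (m : ℂ) * a) :
    (∃ H : AddSubgroup ℂ, (H : Set ℂ) = {c : ℂ | α + c • δ₀ ∈ R}) ∧
    (∀ γ ∈ R, ∀ c : ℂ, α + c • δ₀ ∈ R →
      γ + ((2 * B γ α / B α α) * c) • δ₀ ∈ R) := by
  obtain ⟨B, rfl⟩ : ∃ B' : V →ₗ[ℂ] V →ₗ[ℂ] ℂ, (B' · ·) = B :=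
    ⟨.mk₂ ℂ B (fun x y z => (hB2 z).map_add x y) (fun t x z => (hB2 z).map_smul t x)
      (fun x y z => (hB1 x).map_add y z) (fun t x z => (hB1 x).map_smul t z), rfl⟩
  have hδδ : B δ₀ δ₀ = 0 := (Submodule.span_le (p := LinearMap.ker (B δ₀))).mpr hδ₀ hδ₀span
  have hRδ {γ} (hγ : γ ∈ R) : B γ δ₀ = 0 := (hsymm _ _).trans (hδ₀ γ hγ)
  have hαδ := hRδ hα
  have hδα := hδ₀ α hα
  refine ⟨⟨_, AddSubgroup.coe_closure_eq_of_add_two_nsmul_mem (a := a) ?_ (by simpa using hα)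
    ?_ ?_⟩, ?_⟩
  · intro c hc
    obtain ⟨m, rfl⟩ := hdisc c hc
    exact ⟨m, zsmul_eq_mul _ _⟩
  · exact fun d hd c hc => (add_smul_add_two_nsmul_mem B hrefl hα hαan hαδ hδα hδδ hd hc).1
  · exact fun d hd c hc => (add_smul_add_two_nsmul_mem B hrefl hα hαan hαδ hδα hδδ hd hc).2
  · exact fun γ hγ c hc =>
      (add_sub_coroot_smul_mem B hrefl hα hαan hαδ hδα hδδ hγ (hRδ hγ) hc).1

/-- Let `R ⊆ L` satisfy (GR1), fix `δ₀` in the kernel of the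
form restricted to `ℂR`, and define `F(α) = {c ∈ ℂ : α + c δ₀ ∈ R}`.  If
`α ∈ R` is anisotropic and `F(α) ⊆ ℤa` for some `a ∈ ℂ`, then `F(α)` is a
subgroup of `(ℂ, +)`, and for every `γ ∈ R`, `⟨γ, α^∨⟩ · F(α) ⊆ F(γ)`. -/
theorem stmt_5
    (V : Type*) [AddCommGroup V] [Module ℂ V]
    (B : V → V → ℂ)
    (hB1 : ∀ x : V, IsLinearMap ℂ (B x))
    (hB2 : ∀ y : V, IsLinearMap ℂ (fun x => B x y))
    (hsymm : ∀ x y : V, B x y = B y x)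
    (R : Set V)
    (hneg : ∀ v ∈ R, -v ∈ R)
    -- (GR1)
    (hint : ∀ α ∈ R, ∀ β ∈ R, B α α ≠ 0 → ∃ m : ℤ, 2 * B β α = (m : ℂ) * B α α)
    (hrefl : ∀ α ∈ R, ∀ β ∈ R, B α α ≠ 0 → sRefl B α β ∈ R)
    -- δ₀ lies in the kernel of the form restricted to the span of R
    (δ₀ : V) (hδ₀span : δ₀ ∈ Submodule.span ℂ R) (hδ₀ : ∀ γ ∈ R, B δ₀ γ = 0)
    (α : V) (hα : α ∈ R) (hαan : B α α ≠ 0)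
    -- discreteness: F(α) ⊆ ℤ a
    (a : ℂ) (hdisc : ∀ c : ℂ, α + c • δ₀ ∈ R → ∃ m : ℤ, c = (m : ℂ) * a) :
    (∃ H : AddSubgroup ℂ, (H : Set ℂ) = {c : ℂ | α + c • δ₀ ∈ R}) ∧
    (∀ γ ∈ R, ∀ c : ℂ, α + c • δ₀ ∈ R →
      γ + ((2 * B γ α / B α α) * c) • δ₀ ∈ R) :=
  stmt_5_general V B hB1 hB2 hsymm R hrefl δ₀ hδ₀span hδ₀ α hα hαan a hdisc
end

section
/- For the affine superalgebra B(0|ℓ)^{(1)} with dual Coxeter number h^∨ = ℓ + 1/2, a level k with k + h^∨ = p/(2q) for coprime positive integers p, q is principal admissible if and only if p and q are both odd and p ≥ 2ℓ + 1. -/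
namespace Stmt6

/-- The (rational form of the) weight space of `B(0|ℓ)^{(1)} = osp(1|2ℓ)^{(1)}`:
a triple `(c, x, y)` represents `∑ i, c i • δᵢ + x • Λ₀ + y • δ`. -/
abbrev W (ℓ : ℕ) := (Fin ℓ → ℚ) × ℚ × ℚ

/-- The normalized invariant bilinear form: `(δᵢ, δⱼ) = δᵢⱼ/2`,
`(Λ₀, δ) = 1`, `(Λ₀, Λ₀) = (δ, δ) = 0`, `(δᵢ, Λ₀) = (δᵢ, δ) = 0`. -/
def form (ℓ : ℕ) (v w : W ℓ) : ℚ :=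
  (∑ i, v.1 i * w.1 i) / 2 + v.2.1 * w.2.2 + w.2.1 * v.2.2

/-- The basis vector `δᵢ`. -/
def dl (ℓ : ℕ) (i : Fin ℓ) : W ℓ := (Pi.single i 1, 0, 0)

/-- The fundamental weight `Λ₀`. -/
def Lam0 (ℓ : ℕ) : W ℓ := (0, 1, 0)

/-- The minimal imaginary root `δ`. -/
def dd (ℓ : ℕ) : W ℓ := (0, 0, 1)

/-- The set of real roots of `B(0|ℓ)^{(1)}`:
`{±δᵢ + mδ, ±δᵢ ± δⱼ + mδ (i ≠ j), ±2δᵢ + mδ}`. -/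
def Dre (ℓ : ℕ) : Set (W ℓ) :=
  {v | ∃ m : ℤ,
    (∃ i : Fin ℓ,
      v = dl ℓ i + (m : ℚ) • dd ℓ ∨ v = -dl ℓ i + (m : ℚ) • dd ℓ ∨
      v = (2 : ℚ) • dl ℓ i + (m : ℚ) • dd ℓ ∨
      v = -((2 : ℚ) • dl ℓ i) + (m : ℚ) • dd ℓ) ∨
    (∃ i j : Fin ℓ, i ≠ j ∧
      (v = dl ℓ i + dl ℓ j + (m : ℚ) • dd ℓ ∨
       v = dl ℓ i - dl ℓ j + (m : ℚ) • dd ℓ ∨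
       v = -(dl ℓ i + dl ℓ j) + (m : ℚ) • dd ℓ))}

/-- Positivity of a root: positive `δ`-coefficient, or zero `δ`-coefficient
and first nonzero finite coordinate positive. -/
def Pos (ℓ : ℕ) (v : W ℓ) : Prop :=
  0 < v.2.2 ∨ (v.2.2 = 0 ∧ ∃ i : Fin ℓ, 0 < v.1 i ∧ ∀ j : Fin ℓ, j < i → v.1 j = 0)

/-- The Weyl vector `ρ = h^∨ Λ₀ + ∑ᵢ (ℓ − i + 1/2) δᵢ`, `h^∨ = ℓ + 1/2`. -/
def rhoW (ℓ : ℕ) : W ℓ :=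
  (fun i => (ℓ : ℚ) - ((i : ℕ) : ℚ) - 1 / 2, (ℓ : ℚ) + 1 / 2, 0)

/-- `R̄_μ`: roots `α ∈ Δre` with `α/2 ∉ Δre` such that `2(μ,α) = j(α,α)` for
some integer `j`, odd whenever `2α ∈ Δre`. -/
def Rbar (ℓ : ℕ) (μ : W ℓ) : Set (W ℓ) :=
  {α | α ∈ Dre ℓ ∧ (2⁻¹ : ℚ) • α ∉ Dre ℓ ∧
    ∃ j : ℤ, 2 * form ℓ μ α = (j : ℚ) * form ℓ α α ∧
      ((2 : ℚ) • α ∈ Dre ℓ → Odd j)}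

/-- The integral root system
`R_μ = R̄_μ ∪ {2α : α ∈ R̄_μ, 2α ∈ Δre}` (for the anisotropic superalgebra
`B(0|ℓ)^{(1)}` this coincides with `Δ_μ`). -/
def Rset (ℓ : ℕ) (μ : W ℓ) : Set (W ℓ) :=
  Rbar ℓ μ ∪ {v | ∃ α ∈ Rbar ℓ μ, v = (2 : ℚ) • α ∧ v ∈ Dre ℓ}

/-- A level `k` is *principal admissible* for `B(0|ℓ)^{(1)}` if, with
`μ = kΛ₀ + ρ`: the weight is non-critical (`(μ, δ) ≠ 0`); every positive root
of the integral root system `Δ_μ = R_μ` pairs strictly positively with `μ`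
(quasi-admissibility, via `⟨μ, α^∨⟩ > 0`); the `ℚ`-span of `R_μ` equals the
`ℚ`-span of `Δre` (admissibility); and `Δ_μ` is isometric (a bijective
quotient via a form-preserving linear map) to `Δre` (principality). -/
def PrincipalAdmissible (ℓ : ℕ) (k : ℚ) : Prop :=
  form ℓ (k • Lam0 ℓ + rhoW ℓ) (dd ℓ) ≠ 0 ∧
  (∀ α ∈ Rset ℓ (k • Lam0 ℓ + rhoW ℓ), Pos ℓ α →
    0 < 2 * form ℓ (k • Lam0 ℓ + rhoW ℓ) α / form ℓ α α) ∧
  Submodule.span ℚ (Rset ℓ (k • Lam0 ℓ + rhoW ℓ)) = Submodule.span ℚ (Dre ℓ) ∧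
  ∃ ψ : W ℓ →ₗ[ℚ] W ℓ,
    (∀ x ∈ Submodule.span ℚ (Rset ℓ (k • Lam0 ℓ + rhoW ℓ)),
     ∀ y ∈ Submodule.span ℚ (Rset ℓ (k • Lam0 ℓ + rhoW ℓ)),
      form ℓ (ψ x) (ψ y) = form ℓ x y) ∧
    Set.BijOn ψ (Rset ℓ (k • Lam0 ℓ + rhoW ℓ)) (Dre ℓ)

-- my defs
def rt1 (ℓ : ℕ) (i : Fin ℓ) (ε : ℚ) (m : ℤ) : W ℓ := ((Pi.single i ε : Fin ℓ → ℚ), 0, (m : ℚ))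
def rt2 (ℓ : ℕ) (i j : Fin ℓ) (ε ε' : ℚ) (m : ℤ) : W ℓ :=
  ((Pi.single i ε + Pi.single j ε' : Fin ℓ → ℚ), 0, (m : ℚ))
def mu (ℓ p q : ℕ) : W ℓ := (fun i => (ℓ : ℚ) - ((i : ℕ) : ℚ) - 1 / 2, (p : ℚ) / (2 * (q : ℚ)), 0)

variable {ℓ : ℕ}

lemma e1 (i : Fin ℓ) (m : ℤ) : dl ℓ i + (m : ℚ) • dd ℓ = rt1 ℓ i 1 m := by
  simp [dl, dd, rt1, Prod.ext_iff]
lemma e2 (i : Fin ℓ) (m : ℤ) : -dl ℓ i + (m : ℚ) • dd ℓ = rt1 ℓ i (-1) m := by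
  simp [dl, dd, rt1, Prod.ext_iff, Pi.single_neg]
lemma e3 (i : Fin ℓ) (m : ℤ) : (2 : ℚ) • dl ℓ i + (m : ℚ) • dd ℓ = rt1 ℓ i 2 m := by
  simp [dl, dd, rt1, Prod.ext_iff]
  rw [← Pi.single_smul]; simp
lemma e4 (i : Fin ℓ) (m : ℤ) : -((2 : ℚ) • dl ℓ i) + (m : ℚ) • dd ℓ = rt1 ℓ i (-2) m := by
  simp [dl, dd, rt1, Prod.ext_iff, Pi.single_neg]
  rw [← Pi.single_smul]; simp
lemma e5 (i j : Fin ℓ) (m : ℤ) : dl ℓ i + dl ℓ j + (m : ℚ) • dd ℓ = rt2 ℓ i j 1 1 m := by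
  simp [dl, dd, rt2, Prod.ext_iff]
lemma e6 (i j : Fin ℓ) (m : ℤ) : dl ℓ i - dl ℓ j + (m : ℚ) • dd ℓ = rt2 ℓ i j 1 (-1) m := by
  simp [dl, dd, rt2, Prod.ext_iff, sub_eq_add_neg, Pi.single_neg]
lemma e7 (i j : Fin ℓ) (m : ℤ) : -(dl ℓ i + dl ℓ j) + (m : ℚ) • dd ℓ = rt2 ℓ i j (-1) (-1) m := by
  simp [dl, dd, rt2, Prod.ext_iff, neg_add, Pi.single_neg]
  abel
lemma e8 (i j : Fin ℓ) (ε ε' : ℚ) (m : ℤ) : rt2 ℓ i j ε ε' m = rt2 ℓ j i ε' ε m := by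
  simp [rt2, Prod.ext_iff, add_comm]

lemma mem_Dre_iff {v : W ℓ} :
    v ∈ Dre ℓ ↔ ∃ m : ℤ,
      (∃ i : Fin ℓ, ∃ ε : ℚ, (ε = 1 ∨ ε = -1 ∨ ε = 2 ∨ ε = -2) ∧ v = rt1 ℓ i ε m) ∨
      (∃ i j : Fin ℓ, ∃ ε ε' : ℚ, i ≠ j ∧ (ε = 1 ∨ ε = -1) ∧ (ε' = 1 ∨ ε' = -1) ∧
        v = rt2 ℓ i j ε ε' m) := by
  constructor
  · rintro ⟨m, ⟨i, h | h | h | h⟩ | ⟨i, j, hij, h | h | h⟩⟩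
    · exact ⟨m, Or.inl ⟨i, 1, by norm_num, by rw [h, e1]⟩⟩
    · exact ⟨m, Or.inl ⟨i, -1, by norm_num, by rw [h, e2]⟩⟩
    · exact ⟨m, Or.inl ⟨i, 2, by norm_num, by rw [h, e3]⟩⟩
    · exact ⟨m, Or.inl ⟨i, -2, by norm_num, by rw [h, e4]⟩⟩
    · exact ⟨m, Or.inr ⟨i, j, 1, 1, hij, by norm_num, by norm_num, by rw [h, e5]⟩⟩
    · exact ⟨m, Or.inr ⟨i, j, 1, -1, hij, by norm_num, by norm_num, by rw [h, e6]⟩⟩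
    · exact ⟨m, Or.inr ⟨i, j, -1, -1, hij, by norm_num, by norm_num, by rw [h, e7]⟩⟩
  · rintro ⟨m, ⟨i, ε, (rfl | rfl | rfl | rfl), rfl⟩ | ⟨i, j, ε, ε', hij, hε, hε', rfl⟩⟩
    · exact ⟨m, Or.inl ⟨i, Or.inl (e1 i m).symm⟩⟩
    · exact ⟨m, Or.inl ⟨i, Or.inr (Or.inl (e2 i m).symm)⟩⟩
    · exact ⟨m, Or.inl ⟨i, Or.inr (Or.inr (Or.inl (e3 i m).symm))⟩⟩
    · exact ⟨m, Or.inl ⟨i, Or.inr (Or.inr (Or.inr (e4 i m).symm))⟩⟩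
    · rcases hε with rfl | rfl <;> rcases hε' with rfl | rfl
      · exact ⟨m, Or.inr ⟨i, j, hij, Or.inl (e5 i j m).symm⟩⟩
      · exact ⟨m, Or.inr ⟨i, j, hij, Or.inr (Or.inl (e6 i j m).symm)⟩⟩
      · exact ⟨m, Or.inr ⟨j, i, hij.symm, Or.inr (Or.inl (by rw [e6 j i m, e8]))⟩⟩
      · exact ⟨m, Or.inr ⟨i, j, hij, Or.inr (Or.inr (e7 i j m).symm)⟩⟩

lemma sum_mul_single (f : Fin ℓ → ℚ) (i : Fin ℓ) (x : ℚ) :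
    ∑ k, f k * (Pi.single i x : Fin ℓ → ℚ) k = f i * x := by
  simp [Pi.single_apply, mul_ite, Finset.sum_ite_eq']

lemma form_rt1 (v : W ℓ) (i : Fin ℓ) (ε : ℚ) (m : ℤ) :
    form ℓ v (rt1 ℓ i ε m) = v.1 i * ε / 2 + v.2.1 * m := by
  simp [form, rt1, sum_mul_single]

lemma form_rt2 (v : W ℓ) (i j : Fin ℓ) (ε ε' : ℚ) (m : ℤ) :
    form ℓ v (rt2 ℓ i j ε ε' m) = (v.1 i * ε + v.1 j * ε') / 2 + v.2.1 * m := by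
  simp [form, rt2, mul_add, Finset.sum_add_distrib, sum_mul_single]

lemma form_rt1_self (i : Fin ℓ) (ε : ℚ) (m m' : ℤ) :
    form ℓ (rt1 ℓ i ε m) (rt1 ℓ i ε m') = ε * ε / 2 := by
  rw [form_rt1]; simp [rt1]

lemma form_rt2_self {i j : Fin ℓ} (hij : i ≠ j) (ε ε' : ℚ) (m m' : ℤ) :
    form ℓ (rt2 ℓ i j ε ε' m) (rt2 ℓ i j ε ε' m') = (ε * ε + ε' * ε') / 2 := by
  rw [form_rt2]; simp [rt2, Pi.single_apply, hij, (Ne.symm hij)]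

lemma form_smul_smul (c : ℚ) (v w : W ℓ) :
    form ℓ (c • v) (c • w) = c * c * form ℓ v w := by
  simp only [form, Prod.smul_fst, Prod.smul_snd, Pi.smul_apply, smul_eq_mul]
  rw [show (∑ k, c * v.1 k * (c * w.1 k)) = c * c * ∑ k, v.1 k * w.1 k from by
    rw [Finset.mul_sum]; exact Finset.sum_congr rfl fun k _ => by ring]
  ring

lemma Dre_coeff {v : W ℓ} (hv : v ∈ Dre ℓ) : ∃ m : ℤ, v.2.2 = (m : ℚ) := by
  rcases mem_Dre_iff.mp hv with ⟨m, ⟨i, ε, _, rfl⟩ | ⟨i, j, ε, ε', _, _, _, rfl⟩⟩ <;>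
    exact ⟨m, rfl⟩

lemma Dre_norm {v : W ℓ} (hv : v ∈ Dre ℓ) :
    form ℓ v v = 1/2 ∨ form ℓ v v = 1 ∨ form ℓ v v = 2 := by
  rcases mem_Dre_iff.mp hv with ⟨m, ⟨i, ε, hε, rfl⟩ | ⟨i, j, ε, ε', hij, hε, hε', rfl⟩⟩
  · rw [form_rt1_self]
    rcases hε with rfl | rfl | rfl | rfl <;> norm_num
  · rw [form_rt2_self hij]
    rcases hε with rfl | rfl <;> rcases hε' with rfl | rfl <;> norm_num

lemma short_mem_Rbar {p q : ℕ} (hq0 : 0 < q) {ε : ℚ} (hε : ε = 1 ∨ ε = -1) (i : Fin ℓ) (m : ℤ) :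
    rt1 ℓ i ε (q * m) ∈ Rbar ℓ (mu ℓ p q) := by
  have hqQ : (q : ℚ) ≠ 0 := by positivity
  refine ⟨mem_Dre_iff.mpr ⟨q*m, Or.inl ⟨i, ε, by tauto, rfl⟩⟩, ?_, ?_⟩
  · intro hmem
    have h := Dre_norm hmem
    rw [form_smul_smul, form_rt1_self] at h
    rcases hε with rfl | rfl <;> norm_num at h
  · rcases hε with rfl | rfl
    · refine ⟨2*ℓ - 2*i - 1 + 2*m*p, ?_, fun _ => ⟨(ℓ:ℤ) - i - 1 + m*p, by ring⟩⟩
      rw [form_rt1, form_rt1_self]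
      simp only [mu]
      push_cast
      field_simp
    · refine ⟨-(2*ℓ - 2*i - 1) + 2*m*p, ?_, fun _ => ⟨(i:ℤ) - ℓ + m*p, by ring⟩⟩
      rw [form_rt1, form_rt1_self]
      simp only [mu]
      push_cast
      field_simp
lemma dvd_helper {q P : ℕ} (hcop : Nat.Coprime q P) {m t : ℤ} (h : m * (P : ℤ) = (q : ℤ) * t) :
    ∃ m' : ℤ, m = q * m' := by
  have hc : IsCoprime (q : ℤ) (P : ℤ) := by
    rw [Int.isCoprime_iff_gcd_eq_one, Int.gcd_natCast_natCast]; exact hcop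
  exact hc.dvd_of_dvd_mul_left ⟨t, by linarith⟩

lemma Rbar_dvd {p q : ℕ} (hq0 : 0 < q) (hcop : Nat.Coprime p q) (hqodd : Odd q)
    {α : W ℓ} (hα : α ∈ Rbar ℓ (mu ℓ p q)) : ∃ m : ℤ, α.2.2 = ((q * m : ℤ) : ℚ) := by
  obtain ⟨hDre, hhalf, j, hj, hjodd⟩ := hα
  have hqQ : (q : ℚ) ≠ 0 := by positivity
  have hc2 : Nat.Coprime q (2 * p) :=
    Nat.Coprime.mul_right (Nat.coprime_two_right.mpr hqodd) hcop.symm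
  have hc1 : Nat.Coprime q p := hcop.symm
  rcases mem_Dre_iff.mp hDre with ⟨m, ⟨i, ε, hε, rfl⟩ | ⟨i, i', ε, ε', hij, hε, hε', rfl⟩⟩
  · rw [form_rt1, form_rt1_self] at hj
    simp only [mu] at hj
    rcases hε with rfl | rfl | rfl | rfl
    · have keyZ : m * ((2 * p : ℕ) : ℤ) = (q : ℤ) * (j - (2 * ℓ - 2 * (i : ℕ) - 1)) := by
        have key : (m : ℚ) * (2 * p) = q * (j - (2 * ℓ - 2 * ((i : ℕ) : ℚ) - 1)) := by
          field_simp at hj; linarith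
        exact_mod_cast key
      obtain ⟨m', hm'⟩ := dvd_helper hc2 keyZ
      exact ⟨m', by show (m : ℚ) = _; exact_mod_cast hm'⟩
    · have keyZ : m * ((2 * p : ℕ) : ℤ) = (q : ℤ) * (j + (2 * ℓ - 2 * (i : ℕ) - 1)) := by
        have key : (m : ℚ) * (2 * p) = q * (j + (2 * ℓ - 2 * ((i : ℕ) : ℚ) - 1)) := by
          field_simp at hj; linarith
        exact_mod_cast key
      obtain ⟨m', hm'⟩ := dvd_helper hc2 keyZ
      exact ⟨m', by show (m : ℚ) = _; exact_mod_cast hm'⟩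
    · have keyZ : m * ((p : ℕ) : ℤ) = (q : ℤ) * (2 * j - (2 * ℓ - 2 * (i : ℕ) - 1)) := by
        have key : (m : ℚ) * p = q * (2 * j - (2 * ℓ - 2 * ((i : ℕ) : ℚ) - 1)) := by
          field_simp at hj; linarith
        exact_mod_cast key
      obtain ⟨m', hm'⟩ := dvd_helper hc1 keyZ
      exact ⟨m', by show (m : ℚ) = _; exact_mod_cast hm'⟩
    · have keyZ : m * ((p : ℕ) : ℤ) = (q : ℤ) * (2 * j + (2 * ℓ - 2 * (i : ℕ) - 1)) := by
        have key : (m : ℚ) * p = q * (2 * j + (2 * ℓ - 2 * ((i : ℕ) : ℚ) - 1)) := by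
          field_simp at hj; linarith
        exact_mod_cast key
      obtain ⟨m', hm'⟩ := dvd_helper hc1 keyZ
      exact ⟨m', by show (m : ℚ) = _; exact_mod_cast hm'⟩
  · rw [form_rt2, form_rt2_self hij] at hj
    simp only [mu] at hj
    have keyZ : ∃ t : ℤ, m * ((p : ℕ) : ℤ) = (q : ℤ) * t := by
      rcases hε with rfl | rfl <;> rcases hε' with rfl | rfl
      · exact ⟨j - (2 * ℓ - (i : ℕ) - (i' : ℕ) - 1), by
          have key : (m : ℚ) * p = q * (j - (2 * ℓ - ((i : ℕ) : ℚ) - ((i' : ℕ) : ℚ) - 1)) := by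
            field_simp at hj; linarith
          exact_mod_cast key⟩
      · exact ⟨j - ((i' : ℕ) - (i : ℕ)), by
          have key : (m : ℚ) * p = q * (j - (((i' : ℕ) : ℚ) - ((i : ℕ) : ℚ))) := by
            field_simp at hj; linarith
          exact_mod_cast key⟩
      · exact ⟨j - ((i : ℕ) - (i' : ℕ)), by
          have key : (m : ℚ) * p = q * (j - (((i : ℕ) : ℚ) - ((i' : ℕ) : ℚ))) := by
            field_simp at hj; linarith
          exact_mod_cast key⟩
      · exact ⟨j + (2 * ℓ - (i : ℕ) - (i' : ℕ) - 1), by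
          have key : (m : ℚ) * p = q * (j + (2 * ℓ - ((i : ℕ) : ℚ) - ((i' : ℕ) : ℚ) - 1)) := by
            field_simp at hj; linarith
          exact_mod_cast key⟩
    obtain ⟨t, ht⟩ := keyZ
    obtain ⟨m', hm'⟩ := dvd_helper hc1 ht
    exact ⟨m', by show (m : ℚ) = _; exact_mod_cast hm'⟩
lemma long_mem_Rbar {p q : ℕ} (hq0 : 0 < q) (hpodd : Odd p) (hqodd : Odd q)
    {ε : ℚ} (hε : ε = 2 ∨ ε = -2) (i : Fin ℓ) {m : ℤ} (hmodd : Odd m) :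
    rt1 ℓ i ε (q * m) ∈ Rbar ℓ (mu ℓ p q) := by
  have hqQ : (q : ℚ) ≠ 0 := by positivity
  have hqmodd : Odd ((q : ℤ) * m) := (Int.odd_coe_nat q |>.mpr hqodd).mul hmodd
  refine ⟨mem_Dre_iff.mpr ⟨q*m, Or.inl ⟨i, ε, by tauto, rfl⟩⟩, ?_, ?_⟩
  · intro hmem
    obtain ⟨t, ht⟩ := Dre_coeff hmem
    have ht' : ((2⁻¹ : ℚ) • rt1 ℓ i ε (q*m)).2.2 = (2⁻¹ : ℚ) * ((q*m : ℤ) : ℚ) := rfl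
    rw [ht'] at ht
    have : ((q : ℤ) * m) = 2 * t := by
      have : ((q*m : ℤ) : ℚ) = 2 * t := by linarith
      exact_mod_cast this
    exact (Int.not_odd_iff_even.mpr ⟨t, by linarith⟩) hqmodd
  · have h1 : Odd (2 * (ℓ : ℤ) - 2 * ((i : ℕ) : ℤ) - 1) := ⟨(ℓ : ℤ) - (i : ℕ) - 1, by ring⟩
    have h2 : Odd (m * (p : ℤ)) := hmodd.mul (Int.odd_coe_nat p |>.mpr hpodd)
    rcases hε with rfl | rfl
    · obtain ⟨j, hjj⟩ := h1.add_odd h2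
      refine ⟨j, ?_, fun h2α => by
        have h := Dre_norm h2α
        rw [form_smul_smul, form_rt1_self] at h
        norm_num at h⟩
      rw [form_rt1, form_rt1_self]
      simp only [mu]
      have hj' : ((2 * (ℓ : ℤ) - 2 * ((i : ℕ) : ℤ) - 1 + m * p : ℤ) : ℚ) = (j : ℚ) + j := by
        exact_mod_cast hjj
      have hpm : (p:ℚ)/(2*(q:ℚ))*((q:ℚ)*(m:ℚ)) = (p:ℚ)*m/2 := by field_simp
      push_cast at hj' ⊢
      rw [hpm]
      linarith
    · obtain ⟨j, hjj⟩ := (h1.neg).add_odd h2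
      refine ⟨j, ?_, fun h2α => by
        have h := Dre_norm h2α
        rw [form_smul_smul, form_rt1_self] at h
        norm_num at h⟩
      rw [form_rt1, form_rt1_self]
      simp only [mu]
      have hj' : ((-(2 * (ℓ : ℤ) - 2 * ((i : ℕ) : ℤ) - 1) + m * p : ℤ) : ℚ) = (j : ℚ) + j := by
        exact_mod_cast hjj
      have hpm : (p:ℚ)/(2*(q:ℚ))*((q:ℚ)*(m:ℚ)) = (p:ℚ)*m/2 := by field_simp
      push_cast at hj' ⊢
      rw [hpm]
      linarith

lemma pair_mem_Rbar {p q : ℕ} (hq0 : 0 < q) {i i' : Fin ℓ} (hij : i ≠ i')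
    {ε ε' : ℚ} (hε : ε = 1 ∨ ε = -1) (hε' : ε' = 1 ∨ ε' = -1) (m : ℤ) :
    rt2 ℓ i i' ε ε' (q * m) ∈ Rbar ℓ (mu ℓ p q) := by
  have hqQ : (q : ℚ) ≠ 0 := by positivity
  refine ⟨mem_Dre_iff.mpr ⟨q*m, Or.inr ⟨i, i', ε, ε', hij, hε, hε', rfl⟩⟩, ?_, ?_⟩
  · intro hmem
    have h := Dre_norm hmem
    rw [form_smul_smul, form_rt2_self hij] at h
    rcases hε with rfl | rfl <;> rcases hε' with rfl | rfl <;> norm_num at h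
  · have hOc : ((2:ℚ) • rt2 ℓ i i' ε ε' (q*m) ∈ Dre ℓ) → False := by
      intro h2α
      have h := Dre_norm h2α
      rw [form_smul_smul, form_rt2_self hij] at h
      rcases hε with rfl | rfl <;> rcases hε' with rfl | rfl <;> norm_num at h
    rcases hε with rfl | rfl <;> rcases hε' with rfl | rfl
    · refine ⟨2*ℓ - (i:ℕ) - (i':ℕ) - 1 + m*p, ?_, fun h => absurd h (by exact hOc)⟩
      rw [form_rt2, form_rt2_self hij]
      simp only [mu]; push_cast; field_simp; ring
    · refine ⟨((i':ℕ) : ℤ) - (i:ℕ) + m*p, ?_, fun h => absurd h (by exact hOc)⟩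
      rw [form_rt2, form_rt2_self hij]
      simp only [mu]; push_cast; field_simp; ring
    · refine ⟨((i:ℕ) : ℤ) - (i':ℕ) + m*p, ?_, fun h => absurd h (by exact hOc)⟩
      rw [form_rt2, form_rt2_self hij]
      simp only [mu]; push_cast; field_simp; ring
    · refine ⟨-(2*ℓ - (i:ℕ) - (i':ℕ) - 1) + m*p, ?_, fun h => absurd h (by exact hOc)⟩
      rw [form_rt2, form_rt2_self hij]
      simp only [mu]; push_cast; field_simp; ring

lemma mem_Rset_iff {p q : ℕ} (hq0 : 0 < q) (hcop : Nat.Coprime p q)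
    (hpodd : Odd p) (hqodd : Odd q) {α : W ℓ} :
    α ∈ Rset ℓ (mu ℓ p q) ↔ (α ∈ Dre ℓ ∧ ∃ m : ℤ, α.2.2 = ((q * m : ℤ) : ℚ)) := by
  constructor
  · rintro (hα | ⟨β, hβ, rfl, hDre⟩)
    · exact ⟨hα.1, Rbar_dvd hq0 hcop hqodd hα⟩
    · refine ⟨hDre, ?_⟩
      obtain ⟨m, hm⟩ := Rbar_dvd hq0 hcop hqodd hβ
      refine ⟨2*m, ?_⟩
      have h2 : ((2:ℚ) • β).2.2 = 2 * β.2.2 := rfl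
      rw [h2, hm]; push_cast; ring
  · rintro ⟨hDre, m, hm⟩
    rcases mem_Dre_iff.mp hDre with ⟨m₀, ⟨i, ε, hε, rfl⟩ | ⟨i, i', ε, ε', hij, hε, hε', rfl⟩⟩
    · have hm' : ((m₀:ℤ):ℚ) = ((q*m : ℤ) : ℚ) := hm
      have hm₀ : m₀ = q * m := by exact_mod_cast hm'
      subst hm₀
      rcases hε with rfl | rfl | rfl | rfl
      · exact Or.inl (short_mem_Rbar hq0 (Or.inl rfl) i m)
      · exact Or.inl (short_mem_Rbar hq0 (Or.inr rfl) i m)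
      · rcases Int.even_or_odd m with ⟨m₁, rfl⟩ | hmodd
        · refine Or.inr ⟨rt1 ℓ i 1 (q*m₁), short_mem_Rbar hq0 (Or.inl rfl) i m₁, ?_, hDre⟩
          refine Prod.ext ?_ (Prod.ext ?_ ?_)
          · show (Pi.single i (2:ℚ) : Fin ℓ → ℚ) = (2:ℚ) • (Pi.single i (1:ℚ) : Fin ℓ → ℚ)
            rw [← Pi.single_smul]; norm_num
          · show (0:ℚ) = 2 * 0; ring
          · show ((q * (m₁ + m₁) : ℤ) : ℚ) = 2 * ((q * m₁ : ℤ) : ℚ); push_cast; ring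
        · exact Or.inl (long_mem_Rbar hq0 hpodd hqodd (Or.inl rfl) i hmodd)
      · rcases Int.even_or_odd m with ⟨m₁, rfl⟩ | hmodd
        · refine Or.inr ⟨rt1 ℓ i (-1) (q*m₁), short_mem_Rbar hq0 (Or.inr rfl) i m₁, ?_, hDre⟩
          refine Prod.ext ?_ (Prod.ext ?_ ?_)
          · show (Pi.single i (-2:ℚ) : Fin ℓ → ℚ) = (2:ℚ) • (Pi.single i (-1:ℚ) : Fin ℓ → ℚ)
            rw [← Pi.single_smul]; norm_num
          · show (0:ℚ) = 2 * 0; ring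
          · show ((q * (m₁ + m₁) : ℤ) : ℚ) = 2 * ((q * m₁ : ℤ) : ℚ); push_cast; ring
        · exact Or.inl (long_mem_Rbar hq0 hpodd hqodd (Or.inr rfl) i hmodd)
    · have hm' : ((m₀:ℤ):ℚ) = ((q*m : ℤ) : ℚ) := hm
      have hm₀ : m₀ = q * m := by exact_mod_cast hm'
      subst hm₀
      exact Or.inl (pair_mem_Rbar hq0 hij hε hε' m)
def psi (ℓ : ℕ) (q : ℚ) : W ℓ →ₗ[ℚ] W ℓ where
  toFun v := (v.1, q * v.2.1, v.2.2 / q)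
  map_add' v w := by
    refine Prod.ext rfl (Prod.ext ?_ ?_) <;> simp [mul_add, add_div]
  map_smul' c v := by
    refine Prod.ext rfl (Prod.ext ?_ ?_) <;> simp [smul_eq_mul, mul_div_assoc] <;> ring

lemma psi_form {q : ℚ} (hq : q ≠ 0) (v w : W ℓ) :
    form ℓ (psi ℓ q v) (psi ℓ q w) = form ℓ v w := by
  show (∑ i, v.1 i * w.1 i) / 2 + (q * v.2.1) * (w.2.2 / q) + (q * w.2.1) * (v.2.2 / q)
      = form ℓ v w
  rw [form]
  field_simp

lemma psi_rt1 {q : ℕ} (hq0 : 0 < q) (i : Fin ℓ) (ε : ℚ) (m : ℤ) :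
    psi ℓ (q : ℚ) (rt1 ℓ i ε ((q : ℤ) * m)) = rt1 ℓ i ε m := by
  have hqQ : (q : ℚ) ≠ 0 := by positivity
  refine Prod.ext rfl (Prod.ext ?_ ?_)
  · show (q : ℚ) * 0 = 0; ring
  · show (((q : ℤ) * m : ℤ) : ℚ) / q = (m : ℚ)
    push_cast; field_simp

lemma psi_rt2 {q : ℕ} (hq0 : 0 < q) (i j : Fin ℓ) (ε ε' : ℚ) (m : ℤ) :
    psi ℓ (q : ℚ) (rt2 ℓ i j ε ε' ((q : ℤ) * m)) = rt2 ℓ i j ε ε' m := by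
  have hqQ : (q : ℚ) ≠ 0 := by positivity
  refine Prod.ext rfl (Prod.ext ?_ ?_)
  · show (q : ℚ) * 0 = 0; ring
  · show (((q : ℤ) * m : ℤ) : ℚ) / q = (m : ℚ)
    push_cast; field_simp

lemma psi_bijOn {p q : ℕ} (hq0 : 0 < q) (hcop : Nat.Coprime p q)
    (hpodd : Odd p) (hqodd : Odd q) :
    Set.BijOn (psi ℓ (q : ℚ)) (Rset ℓ (mu ℓ p q)) (Dre ℓ) := by
  have hqQ : (q : ℚ) ≠ 0 := by positivity
  refine ⟨?_, ?_, ?_⟩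
  · intro α hα
    obtain ⟨hDre, m, hm⟩ := (mem_Rset_iff hq0 hcop hpodd hqodd).mp hα
    rcases mem_Dre_iff.mp hDre with ⟨m₀, ⟨i, ε, hε, rfl⟩ | ⟨i, i', ε, ε', hij, hε, hε', rfl⟩⟩
    · have hm' : ((m₀ : ℤ) : ℚ) = ((q * m : ℤ) : ℚ) := hm
      have hm₀ : m₀ = q * m := by exact_mod_cast hm'
      subst hm₀
      rw [psi_rt1 hq0]
      exact mem_Dre_iff.mpr ⟨m, Or.inl ⟨i, ε, hε, rfl⟩⟩
    · have hm' : ((m₀ : ℤ) : ℚ) = ((q * m : ℤ) : ℚ) := hm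
      have hm₀ : m₀ = q * m := by exact_mod_cast hm'
      subst hm₀
      rw [psi_rt2 hq0]
      exact mem_Dre_iff.mpr ⟨m, Or.inr ⟨i, i', ε, ε', hij, hε, hε', rfl⟩⟩
  · intro a _ b _ hab
    have h1 : a.1 = b.1 := by
      have h := congrArg (fun v : W ℓ => v.1) hab; exact h
    have h2 : (q : ℚ) * a.2.1 = (q : ℚ) * b.2.1 := by
      have h := congrArg (fun v : W ℓ => v.2.1) hab; exact h
    have h3 : a.2.2 / q = b.2.2 / q := by
      have h := congrArg (fun v : W ℓ => v.2.2) hab; exact h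
    refine Prod.ext h1 (Prod.ext (mul_left_cancel₀ hqQ h2) ?_)
    field_simp at h3
    exact h3
  · intro β hβ
    rcases mem_Dre_iff.mp hβ with ⟨m, ⟨i, ε, hε, rfl⟩ | ⟨i, i', ε, ε', hij, hε, hε', rfl⟩⟩
    · exact ⟨rt1 ℓ i ε ((q : ℤ) * m),
        (mem_Rset_iff hq0 hcop hpodd hqodd).mpr
          ⟨mem_Dre_iff.mpr ⟨(q : ℤ) * m, Or.inl ⟨i, ε, hε, rfl⟩⟩, m, rfl⟩,
        psi_rt1 hq0 i ε m⟩
    · exact ⟨rt2 ℓ i i' ε ε' ((q : ℤ) * m),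
        (mem_Rset_iff hq0 hcop hpodd hqodd).mpr
          ⟨mem_Dre_iff.mpr ⟨(q : ℤ) * m, Or.inr ⟨i, i', ε, ε', hij, hε, hε', rfl⟩⟩, m, rfl⟩,
        psi_rt2 hq0 i i' ε ε' m⟩

lemma span_eq (hℓ : 1 ≤ ℓ) {p q : ℕ} (hq0 : 0 < q) (hcop : Nat.Coprime p q)
    (hpodd : Odd p) (hqodd : Odd q) :
    Submodule.span ℚ (Rset ℓ (mu ℓ p q)) = Submodule.span ℚ (Dre ℓ) := by
  have hqQ : (q : ℚ) ≠ 0 := by positivity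
  apply le_antisymm
  · exact Submodule.span_mono (fun α hα => ((mem_Rset_iff hq0 hcop hpodd hqodd).mp hα).1)
  · rw [Submodule.span_le]
    intro v hv
    have hdl : ∀ i : Fin ℓ, dl ℓ i ∈ Submodule.span ℚ (Rset ℓ (mu ℓ p q)) := by
      intro i
      apply Submodule.subset_span
      have he : dl ℓ i = rt1 ℓ i 1 ((q : ℤ) * 0) := by
        refine Prod.ext rfl (Prod.ext rfl ?_)
        show (0 : ℚ) = (((q : ℤ) * 0 : ℤ) : ℚ); simp
      rw [he]
      exact Or.inl (short_mem_Rbar hq0 (Or.inl rfl) i 0)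
    have hdd : dd ℓ ∈ Submodule.span ℚ (Rset ℓ (mu ℓ p q)) := by
      set i0 : Fin ℓ := ⟨0, hℓ⟩
      have h1 : rt1 ℓ i0 1 ((q : ℤ) * 1) ∈ Rset ℓ (mu ℓ p q) :=
        Or.inl (short_mem_Rbar hq0 (Or.inl rfl) i0 1)
      have h0 : rt1 ℓ i0 1 ((q : ℤ) * 0) ∈ Rset ℓ (mu ℓ p q) :=
        Or.inl (short_mem_Rbar hq0 (Or.inl rfl) i0 0)
      have he : dd ℓ = (q : ℚ)⁻¹ • (rt1 ℓ i0 1 ((q : ℤ) * 1) - rt1 ℓ i0 1 ((q : ℤ) * 0)) := by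
        refine Prod.ext ?_ (Prod.ext ?_ ?_)
        · show (0 : Fin ℓ → ℚ) = (q : ℚ)⁻¹ • ((Pi.single i0 1 : Fin ℓ → ℚ) - Pi.single i0 1)
          simp
        · show (0 : ℚ) = (q : ℚ)⁻¹ * (0 - 0); ring
        · show (1 : ℚ) = (q : ℚ)⁻¹ * ((((q : ℤ) * 1 : ℤ) : ℚ) - (((q : ℤ) * 0 : ℤ) : ℚ))
          push_cast; field_simp; simp
      rw [he]
      exact Submodule.smul_mem _ _
        (Submodule.sub_mem _ (Submodule.subset_span h1) (Submodule.subset_span h0))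
    rcases hv with ⟨m, ⟨i, h | h | h | h⟩ | ⟨i, j, hij, h | h | h⟩⟩ <;> rw [h]
    · exact Submodule.add_mem _ (hdl i) (Submodule.smul_mem _ _ hdd)
    · exact Submodule.add_mem _ (Submodule.neg_mem _ (hdl i)) (Submodule.smul_mem _ _ hdd)
    · exact Submodule.add_mem _ (Submodule.smul_mem _ _ (hdl i)) (Submodule.smul_mem _ _ hdd)
    · exact Submodule.add_mem _ (Submodule.neg_mem _ (Submodule.smul_mem _ _ (hdl i)))
        (Submodule.smul_mem _ _ hdd)
    · exact Submodule.add_mem _ (Submodule.add_mem _ (hdl i) (hdl j))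
        (Submodule.smul_mem _ _ hdd)
    · exact Submodule.add_mem _ (Submodule.sub_mem _ (hdl i) (hdl j))
        (Submodule.smul_mem _ _ hdd)
    · exact Submodule.add_mem _ (Submodule.neg_mem _ (Submodule.add_mem _ (hdl i) (hdl j)))
        (Submodule.smul_mem _ _ hdd)
lemma quasi {p q : ℕ} (hp0 : 0 < p) (hq0 : 0 < q) (hcop : Nat.Coprime p q)
    (hpodd : Odd p) (hqodd : Odd q) (hpge : 2 * ℓ + 1 ≤ p) :
    ∀ α ∈ Rset ℓ (mu ℓ p q), Pos ℓ α → 0 < 2 * form ℓ (mu ℓ p q) α / form ℓ α α := by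
  intro α hα hpos
  obtain ⟨hDre, m, hm⟩ := (mem_Rset_iff hq0 hcop hpodd hqodd).mp hα
  have hqQ : (q : ℚ) ≠ 0 := by positivity
  have hpQ : (0 : ℚ) < p := by positivity
  have hqZ : (0 : ℤ) < q := by exact_mod_cast hq0
  have hP : (2 * (ℓ : ℚ) + 1) ≤ p := by exact_mod_cast hpge
  have hqm : ∀ m' : ℤ, (p : ℚ) / (2 * (q : ℚ)) * ((((q : ℤ) * m' : ℤ)) : ℚ) = (p : ℚ) * m' / 2 := by
    intro m'; push_cast; field_simp
  rcases mem_Dre_iff.mp hDre with ⟨m₀, ⟨i, ε, hε, rfl⟩ | ⟨i, i', ε, ε', hij, hε, hε', rfl⟩⟩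
  · have hm' : ((m₀ : ℤ) : ℚ) = ((q * m : ℤ) : ℚ) := hm
    have hm₀ : m₀ = q * m := by exact_mod_cast hm'
    subst hm₀
    have hiℓ : ((i : ℕ) : ℚ) + 1 ≤ ℓ := by exact_mod_cast i.2
    have hi0 : (0 : ℚ) ≤ ((i : ℕ) : ℚ) := by positivity
    rw [form_rt1, form_rt1_self]
    simp only [mu]
    rw [hqm m]
    simp only [Pos, rt1] at hpos
    rcases hpos with hpos | ⟨hz, i', hix, hfirst⟩
    · have h0 : (0 : ℤ) < q * m := by exact_mod_cast hpos
      have hm1 : 1 ≤ m := by nlinarith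
      have hm1' : (1 : ℚ) ≤ m := by exact_mod_cast hm1
      have hpm : (p : ℚ) ≤ (p : ℚ) * m := le_mul_of_one_le_right hpQ.le hm1'
      rcases hε with rfl | rfl | rfl | rfl <;>
        refine div_pos (by linarith) (by norm_num)
    · have hz' : (q : ℤ) * m = 0 := by exact_mod_cast hz
      have hm0 : m = 0 := by
        rcases mul_eq_zero.mp hz' with h | h
        · omega
        · exact h
      subst hm0
      rw [Pi.single_apply] at hix
      by_cases hii : i' = i
      · rw [if_pos hii] at hix
        rcases hε with rfl | rfl | rfl | rfl <;>
          refine div_pos (by push_cast; linarith) (by norm_num)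
      · rw [if_neg hii] at hix
        norm_num at hix
  · have hm' : ((m₀ : ℤ) : ℚ) = ((q * m : ℤ) : ℚ) := hm
    have hm₀ : m₀ = q * m := by exact_mod_cast hm'
    subst hm₀
    have hiℓ : ((i : ℕ) : ℚ) + 1 ≤ ℓ := by exact_mod_cast i.2
    have hi0 : (0 : ℚ) ≤ ((i : ℕ) : ℚ) := by positivity
    have hiℓ' : ((i' : ℕ) : ℚ) + 1 ≤ ℓ := by exact_mod_cast i'.2
    have hi0' : (0 : ℚ) ≤ ((i' : ℕ) : ℚ) := by positivity
    rw [form_rt2, form_rt2_self hij]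
    simp only [mu]
    rw [hqm m]
    simp only [Pos, rt2] at hpos
    rcases hpos with hpos | ⟨hz, i'', hix, hfirst⟩
    · have h0 : (0 : ℤ) < q * m := by exact_mod_cast hpos
      have hm1 : 1 ≤ m := by nlinarith
      have hm1' : (1 : ℚ) ≤ m := by exact_mod_cast hm1
      have hpm : (p : ℚ) ≤ (p : ℚ) * m := le_mul_of_one_le_right hpQ.le hm1'
      rcases hε with rfl | rfl <;> rcases hε' with rfl | rfl <;>
        refine div_pos (by linarith) (by norm_num)
    · have hz' : (q : ℤ) * m = 0 := by exact_mod_cast hz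
      have hm0 : m = 0 := by
        rcases mul_eq_zero.mp hz' with h | h
        · omega
        · exact h
      subst hm0
      have hfin : ∀ a b : Fin ℓ, a ≠ b → ((a : ℕ) : ℚ) < ((b : ℕ) : ℚ) → True := fun _ _ _ _ => trivial
      simp only [Pi.add_apply, Pi.single_apply] at hix
      rcases hε with rfl | rfl <;> rcases hε' with rfl | rfl
      · refine div_pos (by push_cast; linarith) (by norm_num)
      · -- (1, -1): need i < i'
        have hii : i'' = i := by
          by_contra hne
          rw [if_neg hne] at hix
          by_cases hne' : i'' = i'
          · rw [if_pos hne'] at hix; norm_num at hix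
          · rw [if_neg hne'] at hix; norm_num at hix
        subst hii
        have hnlt : ¬ i' < i'' := by
          intro hlt
          have h0 := hfirst i' hlt
          simp only [Pi.add_apply, Pi.single_apply, if_neg (Ne.symm hij), if_pos rfl] at h0
          norm_num at h0
        have hlt : (i'' : ℕ) < (i' : ℕ) := by
          have := lt_of_le_of_ne (not_lt.mp hnlt) hij
          exact this
        have hltQ : ((i'' : ℕ) : ℚ) + 1 ≤ ((i' : ℕ) : ℚ) := by exact_mod_cast hlt
        refine div_pos (by push_cast; linarith) (by norm_num)
      · -- (-1, 1): need i' < i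
        have hii : i'' = i' := by
          by_contra hne
          rw [if_neg hne] at hix
          by_cases hne' : i'' = i
          · rw [if_pos hne'] at hix; norm_num at hix
          · rw [if_neg hne'] at hix; norm_num at hix
        subst hii
        have hnlt : ¬ i < i'' := by
          intro hlt
          have h0 := hfirst i hlt
          simp only [Pi.add_apply, Pi.single_apply, if_neg hij, if_pos rfl] at h0
          norm_num at h0
        have hlt : (i'' : ℕ) < (i : ℕ) := by
          have h := lt_of_le_of_ne (not_lt.mp hnlt) (Ne.symm hij); exact h
        have hltQ : ((i'' : ℕ) : ℚ) + 1 ≤ ((i : ℕ) : ℚ) := by exact_mod_cast hlt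
        refine div_pos (by push_cast; linarith) (by norm_num)
      · -- (-1, -1): impossible
        exfalso
        by_cases h1 : i'' = i <;> by_cases h2 : i'' = i'
        · exact hij (h1 ▸ h2 ▸ rfl)
        · rw [if_pos h1, if_neg h2] at hix; norm_num at hix
        · rw [if_neg h1, if_pos h2] at hix; norm_num at hix
        · rw [if_neg h1, if_neg h2] at hix; norm_num at hix
lemma long_not_Rbar {p q : ℕ} (hq0 : 0 < q) (hcop : Nat.Coprime p q)
    (hpar : ¬(Odd p ∧ Odd q)) (i : Fin ℓ) {ε : ℚ} (hε : ε = 2 ∨ ε = -2) (m : ℤ) :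
    rt1 ℓ i ε m ∉ Rbar ℓ (mu ℓ p q) := by
  rintro ⟨hDre, hhalf, j, hj, hjodd⟩
  have hqQ : (q : ℚ) ≠ 0 := by positivity
  have hmodd : Odd m := by
    rcases Int.even_or_odd m with ⟨m₁, rfl⟩ | h
    · exfalso; apply hhalf
      have he : (2⁻¹ : ℚ) • rt1 ℓ i ε (m₁ + m₁) = rt1 ℓ i (2⁻¹ * ε) m₁ := by
        refine Prod.ext ?_ (Prod.ext ?_ ?_)
        · show (2⁻¹ : ℚ) • (Pi.single i ε : Fin ℓ → ℚ) = Pi.single i (2⁻¹ * ε)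
          rw [← Pi.single_smul]; norm_num
        · show (2⁻¹ : ℚ) * 0 = 0; ring
        · show (2⁻¹ : ℚ) * ((m₁ + m₁ : ℤ) : ℚ) = (m₁ : ℚ); push_cast; ring
      rw [he]
      exact mem_Dre_iff.mpr ⟨m₁, Or.inl ⟨i, 2⁻¹ * ε,
        by rcases hε with rfl | rfl <;> norm_num, rfl⟩⟩
    · exact h
  rw [form_rt1, form_rt1_self] at hj
  simp only [mu] at hj
  have hC : Odd (2 * (ℓ : ℤ) - 2 * ((i : ℕ) : ℤ) - 1) := ⟨(ℓ : ℤ) - (i : ℕ) - 1, by ring⟩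
  have h3 : Even (2 * (q : ℤ) * j) := ⟨(q : ℤ) * j, by ring⟩
  have hnb : ¬(Even p ∧ Even q) := by
    rintro ⟨⟨a, ha⟩, ⟨b, hb⟩⟩
    have h2 : (2 : ℕ) ∣ Nat.gcd p q := Nat.dvd_gcd ⟨a, by omega⟩ ⟨b, by omega⟩
    have h1 : Nat.gcd p q = 1 := hcop
    omega
  have main : ∀ s : ℤ, (s = 1 ∨ s = -1) →
      s * ((q : ℤ) * (2 * (ℓ : ℤ) - 2 * ((i : ℕ) : ℤ) - 1)) + m * p = 2 * q * j → False := by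
    intro s hs hkey
    rcases Nat.even_or_odd p with hpe | hpo
    · have hqo : Odd q := by
        rcases Nat.even_or_odd q with h | h
        · exact absurd ⟨hpe, h⟩ hnb
        · exact h
      have h1 : Odd ((q : ℤ) * (2 * (ℓ : ℤ) - 2 * ((i : ℕ) : ℤ) - 1)) :=
        (Int.odd_coe_nat q |>.mpr hqo).mul hC
      have h1' : Odd (s * ((q : ℤ) * (2 * (ℓ : ℤ) - 2 * ((i : ℕ) : ℤ) - 1))) := by
        rcases hs with rfl | rfl
        · simpa using h1
        · simpa using h1.neg
      have h2 : Even (m * (p : ℤ)) := (Int.even_coe_nat p |>.mpr hpe).mul_left m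
      have : Odd (s * ((q : ℤ) * (2 * (ℓ : ℤ) - 2 * ((i : ℕ) : ℤ) - 1)) + m * p) :=
        h1'.add_even h2
      rw [hkey] at this
      exact (Int.not_odd_iff_even.mpr h3) this
    · have hqe : Even q := by
        rcases Nat.even_or_odd q with h | h
        · exact h
        · exact absurd ⟨hpo, h⟩ hpar
      have h1 : Even (s * ((q : ℤ) * (2 * (ℓ : ℤ) - 2 * ((i : ℕ) : ℤ) - 1))) :=
        (((Int.even_coe_nat q |>.mpr hqe).mul_right _).mul_left s)
      have h2 : Odd (m * (p : ℤ)) := hmodd.mul (Int.odd_coe_nat p |>.mpr hpo)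
      have : Odd (s * ((q : ℤ) * (2 * (ℓ : ℤ) - 2 * ((i : ℕ) : ℤ) - 1)) + m * p) :=
        h1.add_odd h2
      rw [hkey] at this
      exact (Int.not_odd_iff_even.mpr h3) this
  rcases hε with rfl | rfl
  · refine main 1 (Or.inl rfl) ?_
    have keyQ : (1 : ℚ) * ((q : ℚ) * (2 * (ℓ : ℚ) - 2 * ((i : ℕ) : ℚ) - 1)) + (m : ℚ) * p
        = 2 * (q : ℚ) * j := by
      field_simp at hj; linarith
    exact_mod_cast keyQ
  · refine main (-1) (Or.inr rfl) ?_
    have keyQ : (-1 : ℚ) * ((q : ℚ) * (2 * (ℓ : ℚ) - 2 * ((i : ℕ) : ℚ) - 1)) + (m : ℚ) * p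
        = 2 * (q : ℚ) * j := by
      field_simp at hj; linarith
    exact_mod_cast keyQ

lemma mu_eq {p q : ℕ} {k : ℚ} (hk : k + ((ℓ : ℚ) + 1 / 2) = (p : ℚ) / (2 * q)) :
    k • Lam0 ℓ + rhoW ℓ = mu ℓ p q := by
  refine Prod.ext ?_ (Prod.ext ?_ ?_)
  · show k • (0 : Fin ℓ → ℚ) + _ = _
    simp [rhoW, mu]
  · show k * 1 + ((ℓ : ℚ) + 1 / 2) = (p : ℚ) / (2 * q)
    rw [mul_one]; exact hk
  · show k * 0 + 0 = 0
    ring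

/-- For the affine Kac–Moody superalgebra `B(0|ℓ)^{(1)}`
with dual Coxeter number `h^∨ = ℓ + 1/2`, a level `k` with
`k + h^∨ = p/(2q)` for coprime positive integers `p, q` is principal
admissible if and only if `p` and `q` are both odd and `p ≥ 2ℓ + 1`. -/
theorem stmt_6 (ℓ : ℕ) (hℓ : 1 ≤ ℓ) (p q : ℕ) (hp : 0 < p) (hq : 0 < q)
    (hcop : Nat.Coprime p q) (k : ℚ)
    (hk : k + ((ℓ : ℚ) + 1 / 2) = (p : ℚ) / (2 * q)) :
    PrincipalAdmissible ℓ k ↔ (Odd p ∧ Odd q ∧ 2 * ℓ + 1 ≤ p) := by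
  have hmu : k • Lam0 ℓ + rhoW ℓ = mu ℓ p q := mu_eq hk
  have hqQ : (q : ℚ) ≠ 0 := by positivity
  rw [PrincipalAdmissible, hmu]
  constructor
  · rintro ⟨hnc, hquasi, hspan, ψ, hψform, hψbij⟩
    have hparity : Odd p ∧ Odd q := by
      by_contra hpar
      have ht : rt1 ℓ ⟨0, hℓ⟩ 2 1 ∈ Dre ℓ :=
        mem_Dre_iff.mpr ⟨1, Or.inl ⟨⟨0, hℓ⟩, 2, by norm_num, rfl⟩⟩
      obtain ⟨γ, hγR, hγψ⟩ := hψbij.surjOn ht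
      have hγspan : γ ∈ Submodule.span ℚ (Rset ℓ (mu ℓ p q)) := Submodule.subset_span hγR
      have hnorm : form ℓ γ γ = 2 := by
        rw [← hψform γ hγspan γ hγspan, hγψ, form_rt1_self]; norm_num
      rcases hγR with hγ | ⟨β, hβ, hγ2, hγDre⟩
      · obtain ⟨hDre, -, -⟩ := id hγ
        rcases mem_Dre_iff.mp hDre with ⟨m, ⟨i, ε, hε, rfl⟩ | ⟨i, i', ε, ε', hij, hε, hε', rfl⟩⟩
        · rcases hε with rfl | rfl | rfl | rfl
          · rw [form_rt1_self] at hnorm; norm_num at hnorm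
          · rw [form_rt1_self] at hnorm; norm_num at hnorm
          · exact long_not_Rbar hq hcop hpar i (Or.inl rfl) m hγ
          · exact long_not_Rbar hq hcop hpar i (Or.inr rfl) m hγ
        · rw [form_rt2_self hij] at hnorm
          rcases hε with rfl | rfl <;> rcases hε' with rfl | rfl <;> norm_num at hnorm
      · have hψβDre : ψ β ∈ Dre ℓ := hψbij.mapsTo (Or.inl hβ)
        obtain ⟨t, htt⟩ := Dre_coeff hψβDre
        have h22 : (ψ γ).2.2 = 1 := by rw [hγψ]; show ((1 : ℤ) : ℚ) = 1; norm_num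
        rw [hγ2, map_smul] at h22
        have h23 : 2 * (ψ β).2.2 = 1 := by
          rw [← h22]; show 2 * (ψ β).2.2 = 2 • (ψ β).2.2; simp [smul_eq_mul]
        rw [htt] at h23
        have h24 : (2 * t : ℤ) = 1 := by exact_mod_cast h23
        omega
    obtain ⟨hpodd, hqodd⟩ := hparity
    refine ⟨hpodd, hqodd, ?_⟩
    have hmem : rt1 ℓ ⟨0, hℓ⟩ (-2) ((q : ℤ) * 1) ∈ Rbar ℓ (mu ℓ p q) :=
      long_mem_Rbar hq hpodd hqodd (Or.inr rfl) ⟨0, hℓ⟩ odd_one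
    have hpos : Pos ℓ (rt1 ℓ ⟨0, hℓ⟩ (-2) ((q : ℤ) * 1)) := by
      refine Or.inl ?_
      show (0 : ℚ) < (((q : ℤ) * 1 : ℤ) : ℚ)
      push_cast
      positivity
    have h := hquasi _ (Or.inl hmem) hpos
    have hval : 2 * form ℓ (mu ℓ p q) (rt1 ℓ ⟨0, hℓ⟩ (-2) ((q : ℤ) * 1)) /
        form ℓ (rt1 ℓ ⟨0, hℓ⟩ (-2) ((q : ℤ) * 1)) (rt1 ℓ ⟨0, hℓ⟩ (-2) ((q : ℤ) * 1))
        = ((p : ℚ) - (2 * ℓ - 1)) / 2 := by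
      rw [form_rt1, form_rt1_self]
      simp only [mu]
      rw [show (((⟨0, hℓ⟩ : Fin ℓ) : ℕ) : ℚ) = 0 by norm_num]
      push_cast
      field_simp
      ring
    rw [hval] at h
    have hgt : 2 * (ℓ : ℚ) < (p : ℚ) + 1 := by linarith
    have hgt' : 2 * ℓ < p + 1 := by exact_mod_cast hgt
    obtain ⟨t, ht⟩ := hpodd
    omega
  · rintro ⟨hpodd, hqodd, hpge⟩
    refine ⟨?_, quasi hp hq hcop hpodd hqodd hpge, span_eq hℓ hq hcop hpodd hqodd,
      psi ℓ (q : ℚ), fun x _ y _ => psi_form hqQ x y, psi_bijOn hq hcop hpodd hqodd⟩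
    have hform : form ℓ (mu ℓ p q) (dd ℓ) = (p : ℚ) / (2 * q) := by
      simp [form, mu, dd]
    rw [hform]
    positivity

end Stmt6
end

section
/- Let t = sl_2 × a (a abelian) act on a module M lying in a category O-type setting, and suppose M = ⊕_μ [M : L_t(μ)] L_t(μ) at the level of characters. Then the following are equivalent for the negative root vector f of the sl_2 factor with root γ: (a) f acts locally nilpotently on M; (b) (e^{γ/2} − e^{−γ/2}) ch M is anti-invariant under s_γ, i.e. s_γ((e^{γ/2} − e^{−γ/2}) ch M) = −(e^{γ/2} − e^{−γ/2}) ch M. -/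
/-!
For `(a) → (b)`: when `E` and `F` are both locally nilpotent, their exponentials make sense
and `σ = exp E · exp (-F) · exp E` is an injective endomorphism with `σ H = -H σ`, so it embeds
each weight space `M_a` into `M_{-a}`; hence `dim M_a = dim M_{-a}`, which is `(b)`.

For `(b) → (a)`: `(b)` says that `δ(x) = d(x - 1) - d(x + 1)` is odd, where `d(c) = dim M_c`.
Telescoping along a string `c + 2ℤ` shows that `d(c + 2n) - d(-c - 2n)` does not depend on
`n`; since every string leaves the support upwards and `d ≥ 0`, this forces `d` to be even.
Then `F`, which lowers weights by `2`, pushes `M_a` into `M_{a - 2N} ≅ M_{2N - a} = 0` for large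
`N`.
-/

open Finset LieAlgebra
open scoped Nat

theorem Finset.sum_range_add_sum_antidiagonal {A : Type*} [AddCommMonoid A] (g : ℕ → ℕ → A)
    {I J : ℕ} (hg : ∀ i j, g i j ≠ 0 → i < I ∧ j < J) :
    ∑ n ∈ range (I + J), ∑ p ∈ antidiagonal n, g p.1 p.2 =
      ∑ i ∈ range I, ∑ j ∈ range J, g i j := by
  rw [← sum_product', ← sum_fiberwise_of_maps_to (g := fun p : ℕ × ℕ ↦ p.1 + p.2)
    (t := range (I + J)) (fun p hp ↦ by simp only [mem_product, mem_range] at hp ⊢; omega)]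
  refine sum_congr rfl fun n _ ↦ (sum_subset (fun p hp ↦ ?_) fun p hp hp' ↦ ?_).symm
  · exact mem_antidiagonal.2 (mem_filter.1 hp).2
  · by_contra hne
    exact hp' (mem_filter.2 ⟨by simpa using hg p.1 p.2 hne, mem_antidiagonal.1 hp⟩)

theorem Function.Even.of_odd_sub_shift {R : Type*} [CommRing R] {d : R → ℕ}
    (hodd : Function.Odd fun x ↦ (d (x - 1) : ℤ) - d (x + 1))
    (hvan : ∀ c, ∃ N : ℕ, d (c + 2 * N) = 0) : Function.Even d := by
  have hstring (c : R) (n : ℕ) : (d (c + 2 * n) : ℤ) - d (-c - 2 * n) = d c - d (-c) := by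
    induction n with
    | zero => simp
    | succ n ih =>
      have h := hodd (c + 2 * n + 1)
      simp only [show -(c + 2 * n + 1) - 1 = -c - 2 * ((n + 1 : ℕ) : R) by push_cast; ring,
        show -(c + 2 * n + 1) + 1 = -c - 2 * (n : R) by ring,
        show c + 2 * n + 1 - 1 = c + 2 * (n : R) by ring,
        show c + 2 * n + 1 + 1 = c + 2 * ((n + 1 : ℕ) : R) by push_cast; ring] at h
      omega
  have hle (c : R) : d c ≤ d (-c) := by
    obtain ⟨N, hN⟩ := hvan c
    have := hstring c N
    rw [hN] at this
    omega
  intro c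
  have := hle (-c)
  rw [neg_neg] at this
  exact le_antisymm this (hle c)

theorem Complex.exists_nat_forall_add_two_mul_ne_sub (S : Finset ℂ) (c : ℂ) :
    ∃ N : ℕ, ∀ μ ∈ S, ∀ m : ℕ, c + 2 * N ≠ μ - 2 * m := by
  obtain ⟨B, hB⟩ := (S.image Complex.re).bddAbove
  obtain ⟨N, hN⟩ := exists_nat_gt ((B - c.re) / 2)
  refine ⟨N, fun μ hμ m h ↦ ?_⟩
  have hre : c.re + 2 * N = μ.re - 2 * m := by simpa using congrArg Complex.re h
  have hμB : μ.re ≤ B := hB (mem_coe.2 (mem_image_of_mem _ hμ))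
  have : (0 : ℝ) ≤ m := m.cast_nonneg
  linarith

namespace Module.End

section Semiring

variable {R M : Type*} [Semiring R] [AddCommMonoid M] [Module R M]

def IsLocallyNilpotent (X : End R M) : Prop := ∀ v : M, ∃ n, (X ^ n) v = 0

theorem IsLocallyNilpotent.mul_of_commute {X Y : End R M} (hX : X.IsLocallyNilpotent)
    (hXY : Commute X Y) : (X * Y).IsLocallyNilpotent := fun v ↦ by
  obtain ⟨n, hn⟩ := hX v
  exact ⟨n, by rw [hXY.mul_pow, (hXY.pow_pow n n).eq, mul_apply, hn, map_zero]⟩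

end Semiring

section Ring

variable {R M : Type*} [Ring R] [AddCommGroup M] [Module R M] {X : End R M}

theorem IsLocallyNilpotent.neg (hX : X.IsLocallyNilpotent) : (-X).IsLocallyNilpotent := fun v ↦ by
  obtain ⟨n, hn⟩ := hX v
  exact ⟨n, by rw [neg_pow, mul_apply, hn, map_zero]⟩

theorem IsLocallyNilpotent.injective_one_add (hX : X.IsLocallyNilpotent) :
    Function.Injective ⇑(1 + X) := by
  refine (injective_iff_map_eq_zero _).2 fun v hv ↦ ?_
  obtain ⟨n, hn⟩ := hX v
  have hfix : Function.IsFixedPt (-X) v := by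
    rw [Function.IsFixedPt, LinearMap.neg_apply, neg_eq_iff_add_eq_zero, add_comm]
    simpa using hv
  rw [← hfix.iterate n, ← pow_apply, neg_pow, mul_apply, hn, map_zero]

end Ring

section CommRing

variable {R M : Type*} [CommRing R] [AddCommGroup M] [Module R M] {H X : End R M} {a : R} {v : M}

theorem apply_mem_eigenspace_neg_of_mul_eq_neg_mul (hX : X * H = -(H * X))
    (hv : v ∈ eigenspace H a) : X v ∈ eigenspace H (-a) := by
  rw [mem_eigenspace_iff] at hv ⊢
  have := congr($hX v)
  rw [mul_apply, hv, map_smul, LinearMap.neg_apply, mul_apply] at this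
  rw [neg_smul, this, neg_neg]

theorem apply_mem_eigenspace_add_of_lie_eq_smul {c : R} (hX : ⁅H, X⁆ = c • X)
    (hv : v ∈ eigenspace H a) : X v ∈ eigenspace H (a + c) := by
  rw [mem_eigenspace_iff] at hv ⊢
  have := congr($hX v)
  rw [Ring.lie_def, LinearMap.sub_apply, mul_apply, mul_apply, hv, map_smul,
    LinearMap.smul_apply, sub_eq_iff_eq_add] at this
  rw [this, add_smul, add_comm]

theorem pow_apply_mem_eigenspace_of_lie_eq_smul {c : R} (hX : ⁅H, X⁆ = c • X)
    (hv : v ∈ eigenspace H a) (n : ℕ) : (X ^ n) v ∈ eigenspace H (a + n * c) := by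
  induction n with
  | zero => simpa using hv
  | succ n ih =>
    rw [pow_succ', mul_apply, Nat.cast_succ, add_one_mul, ← add_assoc]
    exact apply_mem_eigenspace_add_of_lie_eq_smul hX ih

theorem isLocallyNilpotent_of_lie_eq_smul {c : R} (hX : ⁅H, X⁆ = c • X)
    (hH : ⨆ a, eigenspace H a = ⊤)
    (hstring : ∀ a, ∃ N : ℕ, eigenspace H (a + N * c) = ⊥) :
    X.IsLocallyNilpotent := by
  have hweight (a : R) : eigenspace H a ≤ X.maxGenEigenspace 0 := fun v hv ↦ by
    obtain ⟨N, hN⟩ := hstring a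
    have := pow_apply_mem_eigenspace_of_lie_eq_smul hX hv N
    rw [hN, Submodule.mem_bot] at this
    exact (mem_maxGenEigenspace _ _ _).2 ⟨N, by simpa using this⟩
  intro v
  have hv : v ∈ ⨆ a, eigenspace H a := hH ▸ Submodule.mem_top
  simpa using (mem_maxGenEigenspace _ _ _).1 (iSup_le hweight hv)

end CommRing

section Field

variable {K M : Type*} [Field K] [AddCommGroup M] [Module K M]

-- `End K M` carries the commutator bracket but no global `LieRing` instance.
attribute [local instance] LieRing.ofAssociativeRing

theorem pow_mul_eq_sum_antidiagonal (X Y : End K M) (n : ℕ) :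
    X ^ n * Y =
      ∑ p ∈ antidiagonal n, n.choose p.1 • ((ad K (End K M) X ^ p.2) Y * X ^ p.1) := by
  have hcomm : Commute (LinearMap.mulRight K X) (ad K (End K M) X) := by
    rw [ad_eq_lmul_left_sub_lmul_right]
    exact (LinearMap.commute_mulLeft_right X X).symm.sub_right (Commute.refl _)
  calc X ^ n * Y = ((LinearMap.mulRight K X + ad K (End K M) X) ^ n) Y := by
        rw [ad_eq_lmul_left_sub_lmul_right, Pi.sub_apply, add_sub_cancel, LinearMap.pow_mulLeft,
          LinearMap.mulLeft_apply]
    _ = _ := by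
        rw [hcomm.add_pow', LinearMap.sum_apply]
        refine sum_congr rfl fun p _ ↦ ?_
        rw [LinearMap.smul_apply, mul_apply, LinearMap.pow_mulRight, LinearMap.mulRight_apply]

theorem inv_factorial_smul_pow_mul [CharZero K] (X Y : End K M) (n : ℕ) :
    (n ! : K)⁻¹ • (X ^ n * Y) = ∑ p ∈ antidiagonal n,
      ((p.2 ! : K)⁻¹ • (ad K (End K M) X ^ p.2) Y) * ((p.1 ! : K)⁻¹ • X ^ p.1) := by
  rw [pow_mul_eq_sum_antidiagonal, smul_sum]
  refine sum_congr rfl fun p hp ↦ ?_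
  rw [HasAntidiagonal.mem_antidiagonal] at hp
  subst hp
  rw [smul_mul_smul_comm, ← Nat.cast_smul_eq_nsmul K, smul_smul]
  congr 1
  rw [← Nat.add_choose_mul_factorial_mul_factorial p.1 p.2, Nat.choose_symm_add]
  have : ((p.1 + p.2).choose p.2 : K) ≠ 0 :=
    Nat.cast_ne_zero.2 (Nat.choose_pos (Nat.le_add_left _ _)).ne'
  push_cast
  field_simp

def truncExp (X : End K M) (n : ℕ) : End K M := ∑ k ∈ range n, (k ! : K)⁻¹ • X ^ k

theorem truncExp_apply_eq_of_pow_apply_eq_zero {X : End K M} {v : M} {m n : ℕ}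
    (hm : (X ^ m) v = 0) (hn : (X ^ n) v = 0) : truncExp X m v = truncExp X n v := by
  wlog hmn : m ≤ n generalizing m n
  · exact (this hn hm (le_of_not_ge hmn)).symm
  rw [truncExp, truncExp, LinearMap.sum_apply, LinearMap.sum_apply]
  refine sum_subset (range_subset_range.2 hmn) fun k _ hk ↦ ?_
  rw [LinearMap.smul_apply, pow_map_zero_of_le (by simpa using hk) hm, smul_zero]

theorem truncExp_succ (X : End K M) (n : ℕ) :
    truncExp X (n + 1) = 1 + X * ∑ k ∈ range n, ((k + 1)! : K)⁻¹ • X ^ k := by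
  rw [truncExp, sum_range_succ', mul_sum, add_comm]
  simp [pow_succ']

namespace IsLocallyNilpotent

variable {X : End K M}

noncomputable def exp (hX : X.IsLocallyNilpotent) : End K M where
  toFun v := truncExp X (hX v).choose v
  map_add' v w := by
    obtain ⟨n, hv, hw⟩ : ∃ n, (X ^ n) v = 0 ∧ (X ^ n) w = 0 := by
      obtain ⟨a, ha⟩ := hX v
      obtain ⟨b, hb⟩ := hX w
      exact ⟨max a b, pow_map_zero_of_le (le_max_left a b) ha,
        pow_map_zero_of_le (le_max_right a b) hb⟩
    rw [truncExp_apply_eq_of_pow_apply_eq_zero (hX (v + w)).choose_spec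
        (n := n) (by rw [map_add, hv, hw, add_zero]),
      truncExp_apply_eq_of_pow_apply_eq_zero (hX v).choose_spec hv,
      truncExp_apply_eq_of_pow_apply_eq_zero (hX w).choose_spec hw, map_add]
  map_smul' c v := by
    obtain ⟨n, hn⟩ := hX v
    change truncExp X _ (c • v) = c • truncExp X _ v
    rw [truncExp_apply_eq_of_pow_apply_eq_zero (hX (c • v)).choose_spec
        (n := n) (by rw [map_smul, hn, smul_zero]),
      truncExp_apply_eq_of_pow_apply_eq_zero (hX v).choose_spec hn, map_smul]

theorem exp_apply (hX : X.IsLocallyNilpotent) {v : M} {n : ℕ} (hn : (X ^ n) v = 0) :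
    hX.exp v = truncExp X n v :=
  truncExp_apply_eq_of_pow_apply_eq_zero (hX v).choose_spec hn

theorem exp_injective (hX : X.IsLocallyNilpotent) : Function.Injective hX.exp := by
  refine (injective_iff_map_eq_zero _).2 fun v hv ↦ ?_
  obtain ⟨n, hn⟩ := hX v
  rw [hX.exp_apply (pow_map_zero_of_le n.le_succ hn), truncExp_succ] at hv
  have hcomm : Commute X (∑ k ∈ range n, ((k + 1)! : K)⁻¹ • X ^ k) :=
    Commute.sum_right _ _ _ fun k _ ↦ ((Commute.refl X).pow_right k).smul_right _
  exact (injective_iff_map_eq_zero _).1 (hX.mul_of_commute hcomm).injective_one_add v hv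

theorem exp_mul_of_ad_pow_eq_zero [CharZero K] (hX : X.IsLocallyNilpotent) {Y : End K M}
    {N : ℕ} (hY : (ad K (End K M) X ^ N) Y = 0) :
    hX.exp * Y = (∑ k ∈ range N, (k ! : K)⁻¹ • (ad K (End K M) X ^ k) Y) * hX.exp := by
  ext v
  obtain ⟨J, hJ⟩ := hX v
  set g : ℕ → ℕ → M := fun i j ↦
    ((j ! : K)⁻¹ • (ad K (End K M) X ^ j) Y) ((i ! : K)⁻¹ • (X ^ i) v) with hg_def
  have hg (i j : ℕ) (hij : g i j ≠ 0) : i < J ∧ j < N := by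
    refine ⟨lt_of_not_ge fun hi ↦ hij ?_, lt_of_not_ge fun hj ↦ hij ?_⟩
    · simp [hg_def, pow_map_zero_of_le hi hJ]
    · simp [hg_def, pow_map_zero_of_le hj hY]
  have hterm (n : ℕ) :
      (n ! : K)⁻¹ • (X ^ n) (Y v) = ∑ p ∈ antidiagonal n, g p.1 p.2 := by
    simpa [hg_def] using congr($(inv_factorial_smul_pow_mul X Y n) v)
  have hYv : (X ^ (J + N)) (Y v) = 0 := by
    have hzero := hterm (J + N)
    rw [sum_eq_zero fun p hp ↦ ?_] at hzero
    · exact (smul_eq_zero.1 hzero).resolve_left (by simp [Nat.factorial_ne_zero])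
    · by_contra hne
      have := hg _ _ hne
      rw [HasAntidiagonal.mem_antidiagonal] at hp
      omega
  calc hX.exp (Y v) = ∑ n ∈ range (J + N), ∑ p ∈ antidiagonal n, g p.1 p.2 := by
        rw [hX.exp_apply hYv, truncExp, LinearMap.sum_apply]
        exact sum_congr rfl fun n _ ↦ hterm n
    _ = ∑ i ∈ range J, ∑ j ∈ range N, g i j := sum_range_add_sum_antidiagonal g hg
    _ = _ := by
        rw [sum_comm, mul_apply, hX.exp_apply hJ, truncExp, LinearMap.sum_apply,
          LinearMap.sum_apply]
        simp [hg_def, map_sum]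

theorem exp_mul_of_lie_lie_lie_eq_zero [CharZero K] (hX : X.IsLocallyNilpotent) {Y : End K M}
    (hY : ⁅X, ⁅X, ⁅X, Y⁆⁆⁆ = 0) :
    hX.exp * Y = (Y + ⁅X, Y⁆ + (2 : K)⁻¹ • ⁅X, ⁅X, Y⁆⁆) * hX.exp := by
  rw [hX.exp_mul_of_ad_pow_eq_zero (N := 3) (by simpa [pow_succ] using hY)]
  simp [sum_range_succ, pow_succ]

end IsLocallyNilpotent

variable {E F H : End K M}

noncomputable def sl2Reflection (hE : E.IsLocallyNilpotent) (hF : F.IsLocallyNilpotent) :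
    End K M :=
  hE.exp * hF.neg.exp * hE.exp

theorem sl2Reflection_mul [CharZero K] (hE : E.IsLocallyNilpotent) (hF : F.IsLocallyNilpotent)
    (hHE : ⁅H, E⁆ = (2 : K) • E) (hHF : ⁅H, F⁆ = (-2 : K) • F) (hEF : ⁅E, F⁆ = H) :
    sl2Reflection hE hF * H = -(H * sl2Reflection hE hF) := by
  have hEH' : ⁅E, H⁆ = -((2 : K) • E) := by rw [← lie_skew, hHE]
  have hFH' : ⁅-F, H⁆ = (-2 : K) • F := by rw [neg_lie, ← lie_skew, neg_neg, hHF]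
  have hFE' : ⁅-F, E⁆ = H := by rw [neg_lie, ← lie_skew, neg_neg, hEF]
  have hEH : hE.exp * H = (H - (2 : K) • E) * hE.exp := by
    rw [hE.exp_mul_of_lie_lie_lie_eq_zero (by simp [hEH'])]
    simp [hEH', sub_eq_add_neg]
  have hEE : hE.exp * E = E * hE.exp := by
    rw [hE.exp_mul_of_lie_lie_lie_eq_zero (by simp)]
    simp
  have hFH : hF.neg.exp * H = (H - (2 : K) • F) * hF.neg.exp := by
    rw [hF.neg.exp_mul_of_lie_lie_lie_eq_zero (by simp [hFH'])]
    simp [hFH', sub_eq_add_neg]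
  have hFE : hF.neg.exp * E = (E + H - F) * hF.neg.exp := by
    rw [hF.neg.exp_mul_of_lie_lie_lie_eq_zero (by simp [hFE', hFH'])]
    simp [hFE', hFH', sub_eq_add_neg]
  have hFHE : hF.neg.exp * (H - (2 : K) • E) = (-H - (2 : K) • E) * hF.neg.exp := by
    rw [mul_sub, mul_smul_comm, hFH, hFE, ← smul_mul_assoc, ← sub_mul]
    congr 1
    module
  have hEHE : hE.exp * (-H - (2 : K) • E) = -(H * hE.exp) := by
    rw [mul_sub, mul_neg, mul_smul_comm, hEH, hEE, sub_mul, smul_mul_assoc]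
    abel
  calc sl2Reflection hE hF * H = hE.exp * (hF.neg.exp * (hE.exp * H)) := by
        simp only [sl2Reflection, mul_assoc]
    _ = hE.exp * (hF.neg.exp * (H - (2 : K) • E)) * hE.exp := by
        rw [hEH]; simp only [mul_assoc]
    _ = hE.exp * (-H - (2 : K) • E) * hF.neg.exp * hE.exp := by
        rw [hFHE]; simp only [mul_assoc]
    _ = -(H * sl2Reflection hE hF) := by
        rw [hEHE]; simp only [sl2Reflection, mul_assoc, neg_mul]

theorem sl2Reflection_injective (hE : E.IsLocallyNilpotent) (hF : F.IsLocallyNilpotent) :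
    Function.Injective (sl2Reflection hE hF) :=
  hE.exp_injective.comp (hF.neg.exp_injective.comp hE.exp_injective)

theorem finrank_eigenspace_neg [CharZero K] (hE : E.IsLocallyNilpotent)
    (hF : F.IsLocallyNilpotent) (hHE : ⁅H, E⁆ = (2 : K) • E)
    (hHF : ⁅H, F⁆ = (-2 : K) • F) (hEF : ⁅E, F⁆ = H)
    [∀ c, FiniteDimensional K (eigenspace H c)] (a : K) :
    finrank K (eigenspace H (-a)) = finrank K (eigenspace H a) := by
  have hle (c : K) : finrank K (eigenspace H c) ≤ finrank K (eigenspace H (-c)) := by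
    have hmaps : ∀ v ∈ eigenspace H c, sl2Reflection hE hF v ∈ eigenspace H (-c) :=
      fun _ ↦ apply_mem_eigenspace_neg_of_mul_eq_neg_mul (sl2Reflection_mul hE hF hHE hHF hEF)
    refine LinearMap.finrank_le_finrank_of_injective
      (f := (sl2Reflection hE hF).restrict hmaps) ((LinearMap.injective_restrict_iff _).2 ?_)
    rw [LinearMap.ker_eq_bot.2 (sl2Reflection_injective hE hF)]
    exact disjoint_bot_right
  have := hle (-a)
  rw [neg_neg] at this
  exact le_antisymm this (hle a)

end Field

end Module.End

/-- Let `t = sl₂ × a` (with `a` abelian, acting through the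
Cartan element `H`) act on a module `M` in a category-`O` type setting:
`H` acts semisimply with finite-dimensional eigenspaces, `E` acts locally
nilpotently, and the weights lie in finitely many strings `μ − 2ℕ` — so that at
the level of characters `M = ⊕_μ [M : L_t(μ)] L_t(μ)`.  Then the following are
equivalent for the negative root vector `F` of the `sl₂`-factor with root `γ`:
(a) `F` acts locally nilpotently on `M`;
(b) `(e^{γ/2} − e^{−γ/2}) ch M` is anti-invariant under `s_γ`; in terms of the
weight-multiplicity function `d(c) = dim M_c` (weights recorded by their
`H`-eigenvalue, `e^{γ/2}` shifting the eigenvalue by `1` and `s_γ` negating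
it), this reads `d(−x−1) − d(−x+1) = −(d(x−1) − d(x+1))` for all `x`. -/
theorem stmt_12
    (M : Type*) [AddCommGroup M] [Module ℂ M]
    (E F H : Module.End ℂ M)
    (hHE : ⁅H, E⁆ = (2 : ℂ) • E) (hHF : ⁅H, F⁆ = (-2 : ℂ) • F) (hEF : ⁅E, F⁆ = H)
    -- H acts semisimply with finite-dimensional eigenspaces
    (hss : (⨆ c : ℂ, Module.End.eigenspace H c) = ⊤)
    (hfd : ∀ c : ℂ, FiniteDimensional ℂ (Module.End.eigenspace H c))
    -- E acts locally nilpotently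
    (hE : ∀ v : M, ∃ n : ℕ, (E ^ n) v = 0)
    -- category O support condition: weights lie in finitely many strings μ − 2ℕ
    (S : Finset ℂ)
    (hsupp : ∀ c : ℂ, Module.End.eigenspace H c ≠ ⊥ →
      ∃ μ ∈ S, ∃ n : ℕ, c = μ - 2 * n) :
    (∀ v : M, ∃ n : ℕ, (F ^ n) v = 0) ↔
      (∀ x : ℂ,
        (Module.finrank ℂ (Module.End.eigenspace H (-x - 1)) : ℤ) -
          (Module.finrank ℂ (Module.End.eigenspace H (-x + 1)) : ℤ) =
        -((Module.finrank ℂ (Module.End.eigenspace H (x - 1)) : ℤ) -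
          (Module.finrank ℂ (Module.End.eigenspace H (x + 1)) : ℤ))) := by
  have hvan (c : ℂ) : ∃ N : ℕ, Module.End.eigenspace H (c + 2 * N) = ⊥ := by
    obtain ⟨N, hN⟩ := Complex.exists_nat_forall_add_two_mul_ne_sub S c
    refine ⟨N, by_contra fun hne ↦ ?_⟩
    obtain ⟨μ, hμ, m, hm⟩ := hsupp _ hne
    exact hN μ hμ m hm
  constructor
  · intro hF x
    have hsymm := Module.End.finrank_eigenspace_neg hE hF hHE hHF hEF
    rw [show -x - 1 = -(x + 1) by ring, show -x + 1 = -(x - 1) by ring, hsymm, hsymm]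
    ring
  · intro hb
    have heven : Function.Even fun c ↦ Module.finrank ℂ (Module.End.eigenspace H c) :=
      .of_odd_sub_shift hb fun c ↦ (hvan c).imp fun N hN ↦ by simp [hN]
    refine Module.End.isLocallyNilpotent_of_lie_eq_smul hHF hss fun a ↦ ?_
    obtain ⟨N, hN⟩ := hvan (-a)
    refine ⟨N, Submodule.finrank_eq_zero.1 ((heven _).symm.trans ?_)⟩
    beta_reduce
    rw [show -(a + N * -2) = -a + 2 * N by ring, hN, finrank_bot]
end
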